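/- arXiv:2108.09688 — 2 statements merged into one kernel-verified Lean document; each statement's English description precedes it below -/
import Mathlib

section
/- Let X be a Polish space and I a σ-ideal on the Borel subsets of X, and assume the c.c.c. condition: every family of I-positive Borel subsets of X whose pairwise intersections lie in I is countable. Let R ⊆ X × X be a relation with p[R] = X. Then the following are equivalent: (1) for every I-positive Borel set A ⊆ X there exist an I-positive Borel set B ⊆ A and a Borel measurable function f : X → X that uniformizes R on B; (2) there exist a Borel set A ⊆ X with X \ A ∈ I and a Borel measurable function f : X → X that uniformizes R on A. -/
/-!
Take, by Zorn's lemma, a maximal family of `I`-positive Borel sets that carry a Borel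
uniformization and are pairwise almost disjoint. By c.c.c. it is countable, so its union is Borel,
and by maximality together with density of such sets the complement of the union is in `I`.
The countably many uniformizations, restricted to the disjointed pieces of the union, glue to a
single Borel uniformization on the union.
-/

/-- The projection of a relation `R ⊆ X × X` to the first coordinate. -/
def proj {X : Type*} (R : Set (X × X)) : Set X := {x | ∃ y, (x, y) ∈ R}

open Set

section

variable {α β : Type*} [MeasurableSpace α] [MeasurableSpace β]

structure IsSigmaIdeal (I : Set (Set α)) : Prop where
  empty_mem : ∅ ∈ I
  mem_of_subset : ∀ A B : Set α, MeasurableSet A → A ⊆ B → B ∈ I → A ∈ I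
  iUnion_mem : ∀ f : ℕ → Set α, (∀ n, f n ∈ I) → ⋃ n, f n ∈ I

def IsCCC (I : Set (Set α)) : Prop :=
  ∀ 𝒜 : Set (Set α), (∀ A ∈ 𝒜, MeasurableSet A ∧ A ∉ I) →
    𝒜.Pairwise (fun A B => A ∩ B ∈ I) → 𝒜.Countable

def IsUniformizableOn (R : Set (α × β)) (A : Set α) : Prop :=
  ∃ f : α → β, Measurable f ∧ ∀ x ∈ A, (x, f x) ∈ R

namespace IsSigmaIdeal

variable {I : Set (Set α)}

theorem union_mem (hI : IsSigmaIdeal I) {A B : Set α} (hA : A ∈ I) (hB : B ∈ I) :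
    A ∪ B ∈ I := by
  have h := hI.iUnion_mem (fun n => if n = 0 then A else B) fun n => by
    split_ifs <;> assumption
  convert h using 1
  ext x
  simp only [mem_union, mem_iUnion]
  constructor
  · rintro (hx | hx)
    exacts [⟨0, by simpa⟩, ⟨1, by simpa⟩]
  · rintro ⟨n, hn⟩
    split_ifs at hn <;> simp [hn]

theorem inter_notMem_of_compl_mem (hI : IsSigmaIdeal I) {A B : Set α} (hA : MeasurableSet A)
    (hAI : A ∉ I) (hB : Bᶜ ∈ I) : A ∩ B ∉ I := fun hAB =>
  hAI <| hI.mem_of_subset A _ hA (fun x hx => (em (x ∈ B)).imp (⟨hx, ·⟩) id)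
    (hI.union_mem hAB hB)

end IsSigmaIdeal

theorem exists_maximal_pairwise {γ : Type*} (r : γ → γ → Prop) (𝒮 : Set γ) :
    ∃ 𝒜, Maximal (fun 𝒜 => 𝒜 ⊆ 𝒮 ∧ 𝒜.Pairwise r) 𝒜 := by
  refine zorn_subset _ fun c hc𝒮 hchain => ⟨⋃₀ c, ⟨?_, ?_⟩, fun _ => subset_sUnion_of_mem⟩
  · exact sUnion_subset fun 𝒜 h𝒜 => (hc𝒮 h𝒜).1
  · exact (pairwise_sUnion hchain.directedOn).2 fun 𝒜 h𝒜 => (hc𝒮 h𝒜).2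

theorem IsSigmaIdeal.exists_countable_sUnion_compl_mem {I : Set (Set α)} (hI : IsSigmaIdeal I)
    (hccc : IsCCC I) (P : Set α → Prop)
    (hdense : ∀ A, MeasurableSet A → A ∉ I → ∃ B, MeasurableSet B ∧ B ⊆ A ∧ B ∉ I ∧ P B) :
    ∃ 𝒜 : Set (Set α), 𝒜.Countable ∧ (∀ A ∈ 𝒜, MeasurableSet A ∧ P A) ∧ (⋃₀ 𝒜)ᶜ ∈ I := by
  obtain ⟨𝒜, ⟨h𝒜𝒮, h𝒜I⟩, hmax⟩ := exists_maximal_pairwise (fun A B => A ∩ B ∈ I)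
    {A | MeasurableSet A ∧ A ∉ I ∧ P A}
  have hcount : 𝒜.Countable := hccc 𝒜 (fun A hA => ⟨(h𝒜𝒮 hA).1, (h𝒜𝒮 hA).2.1⟩) h𝒜I
  refine ⟨𝒜, hcount, fun A hA => ⟨(h𝒜𝒮 hA).1, (h𝒜𝒮 hA).2.2⟩, ?_⟩
  by_contra hpos
  obtain ⟨B, hB, hBsub, hBI, hPB⟩ :=
    hdense _ (.compl (.sUnion hcount fun A hA => (h𝒜𝒮 hA).1)) hpos
  have hdisj : ∀ A ∈ 𝒜, B ∩ A = ∅ := fun A hA =>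
    eq_empty_of_forall_notMem fun x hx => hBsub hx.1 ⟨A, hA, hx.2⟩
  have hins : insert B 𝒜 ⊆ {A | MeasurableSet A ∧ A ∉ I ∧ P A} ∧
      (insert B 𝒜).Pairwise (fun A B => A ∩ B ∈ I) := by
    refine ⟨insert_subset ⟨hB, hBI, hPB⟩ h𝒜𝒮, pairwise_insert.2 ⟨h𝒜I, fun A hA _ => ?_⟩⟩
    rw [hdisj A hA, inter_comm, hdisj A hA]
    exact ⟨hI.empty_mem, hI.empty_mem⟩
  have hB𝒜 : B ∈ 𝒜 := hmax hins (subset_insert B 𝒜) (mem_insert B 𝒜)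
  exact hBI (inter_self B ▸ hdisj B hB𝒜 ▸ hI.empty_mem)

namespace IsUniformizableOn

variable {R : Set (α × β)}

theorem mono {A B : Set α} (h : IsUniformizableOn R A) (hBA : B ⊆ A) :
    IsUniformizableOn R B :=
  let ⟨f, hf, hfR⟩ := h
  ⟨f, hf, fun x hx => hfR x (hBA hx)⟩

theorem iUnion {B : ℕ → Set α} (hB : ∀ n, MeasurableSet (B n))
    (h : ∀ n, IsUniformizableOn R (B n)) : IsUniformizableOn R (⋃ n, B n) := by
  choose g hg hgR using h
  obtain ⟨f, hf, hfg⟩ := exists_measurable_piecewise (disjointed B) (.disjointed hB) g hg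
    fun i j hij x hx => ((disjoint_disjointed B hij).le_bot hx).elim
  refine ⟨f, hf, fun x hx => ?_⟩
  rw [← iUnion_disjointed] at hx
  obtain ⟨n, hn⟩ := mem_iUnion.1 hx
  rw [hfg n hn]
  exact hgR n x (disjointed_subset B n hn)

theorem sUnion {𝒜 : Set (Set α)} (hcount : 𝒜.Countable) (hmeas : ∀ A ∈ 𝒜, MeasurableSet A)
    (h : ∀ A ∈ 𝒜, IsUniformizableOn R A) (hempty : IsUniformizableOn R ∅) :
    IsUniformizableOn R (⋃₀ 𝒜) := by
  rcases 𝒜.eq_empty_or_nonempty with rfl | hne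
  · rwa [sUnion_empty]
  obtain ⟨B, rfl⟩ := hcount.exists_eq_range hne
  rw [sUnion_range]
  exact iUnion (fun n => hmeas _ ⟨n, rfl⟩) fun n => h _ ⟨n, rfl⟩

end IsUniformizableOn

end

theorem stmt1_general {X : Type*}
    [MeasurableSpace X]
    (I : Set (Set X))
    (hI_empty : (∅ : Set X) ∈ I)
    (hI_mono : ∀ A B : Set X, MeasurableSet A → A ⊆ B → B ∈ I → A ∈ I)
    (hI_union : ∀ f : ℕ → Set X, (∀ n, f n ∈ I) → (⋃ n, f n) ∈ I)
    (hccc : ∀ 𝒜 : Set (Set X), (∀ A ∈ 𝒜, MeasurableSet A ∧ A ∉ I) →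
      (∀ A ∈ 𝒜, ∀ B ∈ 𝒜, A ≠ B → A ∩ B ∈ I) → 𝒜.Countable)
    (R : Set (X × X)) :
    (∀ A : Set X, MeasurableSet A → A ∉ I →
        ∃ B : Set X, MeasurableSet B ∧ B ⊆ A ∧ B ∉ I ∧
          ∃ f : X → X, Measurable f ∧ ∀ x ∈ B, (x, f x) ∈ R) ↔
      (∃ A : Set X, MeasurableSet A ∧ Aᶜ ∈ I ∧
        ∃ f : X → X, Measurable f ∧ ∀ x ∈ A, (x, f x) ∈ R) := by
  have hI : IsSigmaIdeal I := ⟨hI_empty, hI_mono, hI_union⟩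
  constructor
  · intro hdense
    obtain ⟨𝒜, hcount, h𝒜, hcompl⟩ :=
      hI.exists_countable_sUnion_compl_mem hccc (IsUniformizableOn R) hdense
    have hmeas : ∀ A ∈ 𝒜, MeasurableSet A := fun A hA => (h𝒜 A hA).1
    exact ⟨⋃₀ 𝒜, .sUnion hcount hmeas, hcompl, IsUniformizableOn.sUnion hcount hmeas
      (fun A hA => (h𝒜 A hA).2) ⟨id, measurable_id, fun _ => False.elim⟩⟩
  · rintro ⟨A, hA, hAc, hunif⟩ A₀ hA₀ hA₀I
    exact ⟨A₀ ∩ A, hA₀.inter hA, inter_subset_left,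
      hI.inter_notMem_of_compl_mem hA₀ hA₀I hAc, IsUniformizableOn.mono hunif inter_subset_right⟩

/-- Lemma 2.2 (for a single relation with full projection): under c.c.c.,
uniformization up to `I` on densely many positive sets is equivalent to
uniformization on a single Borel set whose complement is in `I`. -/
theorem stmt1 {X : Type*} [TopologicalSpace X] [PolishSpace X]
    [MeasurableSpace X] [BorelSpace X]
    (I : Set (Set X))
    (hI_borel : ∀ A ∈ I, MeasurableSet A)
    (hI_empty : (∅ : Set X) ∈ I)
    (hI_mono : ∀ A B : Set X, MeasurableSet A → A ⊆ B → B ∈ I → A ∈ I)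
    (hI_union : ∀ f : ℕ → Set X, (∀ n, f n ∈ I) → (⋃ n, f n) ∈ I)
    (hccc : ∀ 𝒜 : Set (Set X), (∀ A ∈ 𝒜, MeasurableSet A ∧ A ∉ I) →
      (∀ A ∈ 𝒜, ∀ B ∈ 𝒜, A ≠ B → A ∩ B ∈ I) → 𝒜.Countable)
    (R : Set (X × X)) (hR : proj R = Set.univ) :
    (∀ A : Set X, MeasurableSet A → A ∉ I →
        ∃ B : Set X, MeasurableSet B ∧ B ⊆ A ∧ B ∉ I ∧
          ∃ f : X → X, Measurable f ∧ ∀ x ∈ B, (x, f x) ∈ R) ↔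
      (∃ A : Set X, MeasurableSet A ∧ Aᶜ ∈ I ∧
        ∃ f : X → X, Measurable f ∧ ∀ x ∈ A, (x, f x) ∈ R) :=
  stmt1_general I hI_empty hI_mono hI_union hccc R
end

section
/- Let G = ℕ → ZMod 2 be the Cantor group, i.e., the space of binary sequences with the product topology and pointwise addition modulo 2. Let R ⊆ G be a set that is closed under addition (x, y ∈ R implies x + y ∈ R), contains every finitely supported element of G (every x ∈ G with x(n) = 0 for all but finitely many n), and satisfies R ≠ G. If R is Baire measurable (i.e., has the Baire property: R differs from an open set by a meager set), then R is meager. -/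
/-!
A subgroup `H` of a topological group is invariant under translation by its own elements, so if
it contains a countable dense set `D`, then `Hᶜ` is covered by the countably many `D`-translates
of `U \ H`, where `U` is an open set with `H =ᵇ U`. Hence if `H` is non-meagre (so `U ≠ ∅`),
`Hᶜ` is meagre; but then so is every coset `z + H ⊆ Hᶜ` with `z ∉ H`, and in particular `H`.
-/

open Filter Set Topology

lemma Filter.EventuallyEq.isMeagre_diff {X : Type*} [TopologicalSpace X] {s t : Set X}
    (h : s =ᵇ t) : IsMeagre (s \ t) :=
  mem_of_superset (eventuallyEq_set.mp h) fun _ hx hd => hd.2 (hx.mp hd.1)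

section FiniteSupport

variable {ι M : Type*} [Zero M]

lemma dense_setOf_support_finite [TopologicalSpace M] :
    Dense {x : ι → M | (Function.support x).Finite} := by
  intro x
  have htend : Tendsto (fun s : Finset ι => (s : Set ι).indicator x) atTop (𝓝 x) := by
    refine tendsto_pi_nhds.mpr fun i => tendsto_const_nhds.congr' ?_
    filter_upwards [eventually_ge_atTop {i}] with s hs
    exact (indicator_of_mem (Finset.singleton_subset_iff.mp hs) x).symm
  exact mem_closure_of_tendsto htend
    (Eventually.of_forall fun s => s.finite_toSet.subset Set.support_indicator_subset)

lemma countable_setOf_support_finite [Countable ι] [Countable M] :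
    {x : ι → M | (Function.support x).Finite}.Countable := by
  refine (countable_range (fun f : ι →₀ M => ⇑f)).mono fun x hx => ?_
  exact ⟨Finsupp.ofSupportFinite x hx, rfl⟩

end FiniteSupport

section Translation

variable {G : Type*} [TopologicalSpace G] [AddGroup G] [ContinuousAdd G]

lemma isMeagre_compl_of_add_mem_imp_mem {A D : Set G} (hDc : D.Countable) (hDd : Dense D)
    (hA : ∀ z, ∀ d ∈ D, z + d ∈ A → z ∈ A) (hbm : BaireMeasurableSet A) (hnm : ¬IsMeagre A) :
    IsMeagre Aᶜ := by
  obtain ⟨U, hUo, hAU⟩ := hbm.residualEq_isOpen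
  obtain ⟨u, hu⟩ : U.Nonempty := by
    refine nonempty_iff_ne_empty.mpr fun hU => hnm ?_
    simpa [hU] using hAU.isMeagre_diff
  have hcover : Aᶜ ⊆ ⋃ d ∈ D, (· + d) ⁻¹' (U \ A) := fun z hz => by
    obtain ⟨d, hdU, hdD⟩ := hDd.inter_open_nonempty ((z + ·) ⁻¹' U)
      (hUo.preimage (continuous_const_add z)) ⟨-z + u, by simpa⟩
    exact mem_biUnion hdD ⟨hdU, fun h => hz (hA z d hdD h)⟩
  refine (isMeagre_biUnion hDc fun d _ => ?_).mono hcover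
  exact hAU.symm.isMeagre_diff.preimage_of_isOpenMap (continuous_add_const d)
    (isOpenMap_add_right d)

theorem AddSubgroup.isMeagre_of_baireMeasurableSet (H : AddSubgroup G) {D : Set G}
    (hDc : D.Countable) (hDd : Dense D) (hDH : D ⊆ H) (hH : H ≠ ⊤)
    (hbm : BaireMeasurableSet (H : Set G)) : IsMeagre (H : Set G) := by
  by_contra hnm
  have hcompl : IsMeagre (H : Set G)ᶜ := isMeagre_compl_of_add_mem_imp_mem hDc hDd
    (fun _ _ hd => (H.add_mem_cancel_right (hDH hd)).mp) hbm hnm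
  obtain ⟨z, hz⟩ := SetLike.exists_not_mem_of_ne_top H hH
  have hcoset : (H : Set G) ⊆ (z + ·) ⁻¹' (H : Set G)ᶜ :=
    fun _ hh hzh => hz ((H.add_mem_cancel_right hh).mp hzh)
  exact hnm ((hcompl.preimage_of_isOpenMap (continuous_const_add z)
    (isOpenMap_add_left z)).mono hcoset)

end Translation

/-- Claim inside Lemma 5.2: a proper subset of the Cantor group `ℕ → ZMod 2`
that is closed under addition and contains all finitely supported sequences
is meager whenever it is Baire measurable. -/
theorem stmt5 (R : Set (ℕ → ZMod 2))
    (h_add : ∀ x ∈ R, ∀ y ∈ R, x + y ∈ R)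
    (h_fin : ∀ x : ℕ → ZMod 2, ({n : ℕ | x n ≠ 0}).Finite → x ∈ R)
    (h_ne : R ≠ Set.univ)
    (h_bm : BaireMeasurableSet R) :
    IsMeagre R := by
  let H : AddSubgroup (ℕ → ZMod 2) :=
    { carrier := R
      add_mem' := fun hx hy => h_add _ hx _ hy
      zero_mem' := h_fin 0 (by simp)
      neg_mem' := fun {x} hx => by rwa [CharTwo.neg_eq x] }
  exact H.isMeagre_of_baireMeasurableSet countable_setOf_support_finite dense_setOf_support_finite
    h_fin (fun h => h_ne (AddSubgroup.coe_eq_univ.mpr h)) h_bm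
end
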